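/- arXiv:1810.10280 — 2 statements merged into one kernel-verified Lean document; each statement's English description precedes it below -/
import Mathlib

section
/- Fix an integer m ≥ 1. For a sequence a of positive reals, the following are equivalent: (1) for every sequence x of positive reals in υC_∞^G(Δ_G^m) (i.e. x ∈ C_∞^G(Δ_G^m) with x_1 = ⋯ = x_m = 1), the series ∑_{k=1}^∞ |log a_k| · |log x_k| converges; (2) the series ∑_{k=1}^∞ k^m · |log a_k| converges. (This identifies the α-dual: [υC_∞^G(Δ_G^m)]^α = { a : ∑_G e^{k^m} ⊙ |a_k|_G < ∞ }.) -/
/-- Classical `m`-th order forward difference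
`Δ^m y_k = ∑_{v=0}^m (−1)^v C(m,v) y_{k+v}`. -/
noncomputable def fdiff (m : ℕ) (y : ℕ → ℝ) (k : ℕ) : ℝ :=
  ∑ v ∈ Finset.range (m + 1), (-1 : ℝ) ^ v * (m.choose v : ℝ) * y (k + v)

/-- The Cesàro mean `(1/n) ∑_{k=1}^n Δ^m (log x)_k`. -/
noncomputable def cesaro (m : ℕ) (x : ℕ → ℝ) (n : ℕ) : ℝ :=
  (1 / (n : ℝ)) * ∑ k ∈ Finset.Icc 1 n, fdiff m (fun j => Real.log (x j)) k

/-- Membership in the bigeometric Cesàro difference space `C_p^G(Δ_G^m)`. -/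
def memCpG (m : ℕ) (p : ℝ) (x : ℕ → ℝ) : Prop :=
  (∀ k, 1 ≤ k → 0 < x k) ∧ Summable (fun n : ℕ => |cesaro m x n| ^ p)

/-- Membership in the bigeometric Cesàro difference space `C_∞^G(Δ_G^m)`. -/
def memCinfG (m : ℕ) (x : ℕ → ℝ) : Prop :=
  (∀ k, 1 ≤ k → 0 < x k) ∧ ∃ C : ℝ, ∀ n : ℕ, |cesaro m x n| ≤ C

/-!
Put `w k = log x_{k+1}`. Since `Δ^m = (-1)^m Δ_[1]^[m]`, the Cesàro mean of order `n` is
`±(1/n) ∑_{k<n} Δ_[1]^[m] w k = ±(1/n) (Δ_[1]^[m-1] w n - Δ_[1]^[m-1] w 0)`, so bounded Cesàro means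
make `Δ_[1]^[m-1] w` grow at most linearly, and summing `m - 1` more times gives
`|log x_k| = O(k^m)`; hence `∑ k^m |log a_k| < ∞` suffices. Conversely, the test sequence
`x_k = exp C(k-1, m)` equals `1` for `k ≤ m` and has constant `m`-th difference, so it lies in the
space, and `C(k, m) ≍ k^m` turns the summability against it into `∑ k^m |log a_k| < ∞`.
-/

open Finset fwdDiff Asymptotics Filter

theorem fdiff_eq_neg_one_pow_mul_fwdDiff_iter (m : ℕ) (y : ℕ → ℝ) (k : ℕ) :
    fdiff m y k = (-1) ^ m * Δ_[1] ^[m] y k := by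
  rw [fdiff, fwdDiff_iter_eq_sum_shift, mul_sum]
  refine sum_congr rfl fun v hv => ?_
  obtain ⟨u, rfl⟩ := Nat.exists_eq_add_of_le (Nat.lt_succ_iff.mp (mem_range.mp hv))
  have hsign : ((-1 : ℝ) ^ (u + u)) = 1 := (Even.add_self u).neg_one_pow
  rw [zsmul_eq_mul, nsmul_one, Nat.cast_id, Nat.add_sub_cancel_left]
  push_cast
  linear_combination -(-1) ^ v * ((v + u).choose v : ℝ) * y (k + v) * hsign

theorem cesaro_eq_sum_range_fwdDiff_iter (m : ℕ) (x : ℕ → ℝ) (n : ℕ) :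
    cesaro m x n = (-1) ^ m / n * ∑ k ∈ range n, Δ_[1] ^[m] (fun j => Real.log (x (j + 1))) k := by
  rw [cesaro, ← Ico_add_one_right_eq_Icc, sum_Ico_eq_sum_range, Nat.add_sub_cancel]
  simp_rw [fdiff_eq_neg_one_pow_mul_fwdDiff_iter, add_comm 1,
    fwdDiff_iter_comp_add 1 (fun j => Real.log (x j)) 1, ← mul_sum]
  ring

theorem abs_le_of_abs_sum_range_fwdDiff_le {f : ℕ → ℝ} {C : ℝ} {q : ℕ}
    (h : ∀ n, |∑ k ∈ range n, Δ_[1] f k| ≤ C * (n + 1) ^ q) (n : ℕ) :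
    |f n| ≤ (|f 0| + C) * (n + 1) ^ q := by
  have hsum : ∑ k ∈ range n, Δ_[1] f k = f n - f 0 := sum_range_sub f n
  have hone : (1 : ℝ) ≤ (n + 1) ^ q := one_le_pow₀ (by linarith [n.cast_nonneg (α := ℝ)])
  calc |f n| ≤ |f 0| + |f n - f 0| := by simpa using abs_add_le (f 0) (f n - f 0)
    _ ≤ |f 0| * (n + 1) ^ q + C * (n + 1) ^ q :=
        add_le_add (le_mul_of_one_le_right (abs_nonneg _) hone) (hsum ▸ h n)
    _ = (|f 0| + C) * (n + 1) ^ q := by ring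

theorem abs_sum_range_le_of_abs_le {g : ℕ → ℝ} {C : ℝ} {p : ℕ}
    (h : ∀ n, |g n| ≤ C * (n + 1) ^ p) (n : ℕ) :
    |∑ k ∈ range n, g k| ≤ C * (n + 1) ^ (p + 1) := by
  have hC : 0 ≤ C := by simpa using (abs_nonneg _).trans (h 0)
  calc |∑ k ∈ range n, g k| ≤ ∑ k ∈ range n, |g k| := abs_sum_le_sum_abs _ _
    _ ≤ ∑ _k ∈ range n, C * (n + 1) ^ p := by
        refine sum_le_sum fun k hk => (h k).trans ?_
        have : (k : ℝ) ≤ n := by exact_mod_cast (mem_range.mp hk).le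
        gcongr
    _ = n * (C * (n + 1) ^ p) := by simp
    _ ≤ (n + 1) * (C * (n + 1) ^ p) := by gcongr; linarith
    _ = C * (n + 1) ^ (p + 1) := by ring

theorem exists_abs_le_of_abs_fwdDiff_iter_le (j : ℕ) {f : ℕ → ℝ} {C : ℝ} {p : ℕ}
    (h : ∀ n, |Δ_[1] ^[j] f n| ≤ C * (n + 1) ^ p) :
    ∃ D, ∀ n, |f n| ≤ D * (n + 1) ^ (p + j) := by
  induction j generalizing f with
  | zero => exact ⟨C, h⟩
  | succ j ih =>
    obtain ⟨D, hD⟩ := ih (f := Δ_[1] f) h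
    exact ⟨_, abs_le_of_abs_sum_range_fwdDiff_le (abs_sum_range_le_of_abs_le hD)⟩

theorem exists_abs_log_le_of_memCinfG {m : ℕ} (hm : 1 ≤ m) {x : ℕ → ℝ} (hx : memCinfG m x) :
    ∃ D, ∀ k, |Real.log (x (k + 1))| ≤ D * (k + 1) ^ m := by
  obtain ⟨-, C, hC⟩ := hx
  set w : ℕ → ℝ := fun j => Real.log (x (j + 1))
  have hsum : ∀ n, |∑ k ∈ range n, Δ_[1] ^[m] w k| ≤ C * (n + 1) ^ 1 := by
    intro n
    have hC0 : 0 ≤ C := (abs_nonneg _).trans (hC 0)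
    rcases n.eq_zero_or_pos with rfl | hn
    · simpa using hC0
    have hces := hC n
    rw [cesaro_eq_sum_range_fwdDiff_iter, abs_mul, abs_div, abs_pow, abs_neg, abs_one, one_pow,
      Nat.abs_cast, one_div, inv_mul_le_iff₀ (by exact_mod_cast hn)] at hces
    linarith
  obtain ⟨j, rfl⟩ := Nat.exists_eq_add_of_le' hm
  rw [Function.iterate_succ_apply'] at hsum
  obtain ⟨D, hD⟩ := exists_abs_le_of_abs_fwdDiff_iter_le j
    (abs_le_of_abs_sum_range_fwdDiff_le hsum)
  exact ⟨D, fun k => by simpa [add_comm 1 j] using hD k⟩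

theorem fwdDiff_iter_natCast_choose (m : ℕ) :
    Δ_[1] ^[m] (fun n : ℕ => (n.choose m : ℝ)) = fun _ => 1 := by
  funext y
  have := congr_fun (fwdDiff_iter_choose 0 m) y
  simp only [add_zero, Nat.choose_zero_right, Nat.cast_one] at this
  simp only [fwdDiff_iter_eq_sum_shift, zsmul_eq_mul] at this ⊢
  exact_mod_cast this

noncomputable def expChoose (m k : ℕ) : ℝ :=
  Real.exp ((k - 1).choose m)

theorem log_expChoose_succ (m k : ℕ) : Real.log (expChoose m (k + 1)) = k.choose m := by
  simp [expChoose]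

theorem expChoose_eq_one {m i : ℕ} (h1 : 1 ≤ i) (hm : i ≤ m) : expChoose m i = 1 := by
  simp [expChoose, Nat.choose_eq_zero_of_lt (show i - 1 < m by omega)]

theorem memCinfG_expChoose (m : ℕ) : memCinfG m (expChoose m) := by
  refine ⟨fun k _ => Real.exp_pos _, 1, fun n => ?_⟩
  simp_rw [cesaro_eq_sum_range_fwdDiff_iter, log_expChoose_succ, fwdDiff_iter_natCast_choose,
    sum_const, card_range, nsmul_one]
  rcases n.eq_zero_or_pos with rfl | hn
  · simp
  · rw [div_mul_cancel₀ _ (by positivity), abs_pow, abs_neg, abs_one, one_pow]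

theorem natCast_succ_pow_isBigO_choose (m : ℕ) :
    (fun k : ℕ => ((k + 1 : ℕ) : ℝ) ^ m) =O[atTop] fun k => (k.choose m : ℝ) := by
  have hsucc : (fun k : ℕ => ((k + 1 : ℕ) : ℝ)) =O[atTop] fun k => (k : ℝ) := by
    refine IsBigO.of_bound 2 (eventually_atTop.mpr ⟨1, fun k hk => ?_⟩)
    have : (1 : ℝ) ≤ k := by exact_mod_cast hk
    simp only [Real.norm_natCast]
    push_cast
    linarith
  exact (hsucc.pow m).trans (isTheta_choose m).isBigO_symm

theorem upsilonCinfG_alpha_dual_general (m : ℕ) (hm : 1 ≤ m) (a : ℕ → ℝ) :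
    (∀ x : ℕ → ℝ, memCinfG m x → (∀ i, 1 ≤ i → i ≤ m → x i = 1) →
        Summable (fun k : ℕ => |Real.log (a (k + 1))| * |Real.log (x (k + 1))|)) ↔
      Summable (fun k : ℕ => ((k + 1 : ℕ) : ℝ) ^ m * |Real.log (a (k + 1))|) := by
  constructor
  · intro h
    have hsum := h _ (memCinfG_expChoose m) fun i => expChoose_eq_one
    simp_rw [log_expChoose_succ, Nat.abs_cast] at hsum
    refine summable_of_isBigO_nat' hsum ?_
    exact ((isBigO_refl _ _).mul (natCast_succ_pow_isBigO_choose m)).congr_left fun k => mul_comm _ _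
  · rintro hS x hx -
    obtain ⟨D, hD⟩ := exists_abs_log_le_of_memCinfG hm hx
    refine (hS.mul_left D).of_nonneg_of_le (fun k => by positivity) fun k => ?_
    calc |Real.log (a (k + 1))| * |Real.log (x (k + 1))|
        ≤ |Real.log (a (k + 1))| * (D * ((k + 1 : ℕ) : ℝ) ^ m) := by
          gcongr; exact_mod_cast hD k
      _ = D * (((k + 1 : ℕ) : ℝ) ^ m * |Real.log (a (k + 1))|) := by ring

/-- α-dual of `υC_∞^G(Δ_G^m)`:
a positive sequence `a` satisfies `∑_G |a_k ⊙ x_k|_G < ∞` for every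
`x ∈ υC_∞^G(Δ_G^m)` if and only if `∑_G e^{k^m} ⊙ |a_k|_G < ∞`,
i.e. `∑_{k≥1} |log a_k|·|log x_k| < ∞` for all such `x` iff
`∑_{k≥1} k^m·|log a_k| < ∞`. -/
theorem upsilonCinfG_alpha_dual (m : ℕ) (hm : 1 ≤ m) (a : ℕ → ℝ)
    (ha : ∀ k, 1 ≤ k → 0 < a k) :
    (∀ x : ℕ → ℝ, memCinfG m x → (∀ i, 1 ≤ i → i ≤ m → x i = 1) →
        Summable (fun k : ℕ => |Real.log (a (k + 1))| * |Real.log (x (k + 1))|)) ↔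
      Summable (fun k : ℕ => ((k + 1 : ℕ) : ℝ) ^ m * |Real.log (a (k + 1))|) :=
  upsilonCinfG_alpha_dual_general m hm a
end

section
/- Fix an integer m ≥ 1. For a sequence a of positive reals, the series ∑_{k=1}^∞ |log a_k| · |log x_k| converges for every x ∈ C_∞^G(Δ_G^m) if and only if it converges for every x ∈ υC_∞^G(Δ_G^m). (That is, the α-duals coincide: [C_∞^G(Δ_G^m)]^α = [υC_∞^G(Δ_G^m)]^α.) -/
/-!
Changing finitely many terms of `x` changes only finitely many of the differences `Δ^m (log x)_k`,
hence moves the partial sums of the Cesàro means by a bounded amount and keeps them bounded.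
So setting `x₁ = ⋯ = x_m = 1` maps `C_∞^G(Δ_G^m)` into `υC_∞^G(Δ_G^m)`, and it changes only
finitely many terms of the dual series, which does not affect its convergence.
-/

open Finset

lemma sum_abs_Icc_le_of_eq_zero_of_lt {d : ℕ → ℝ} {N : ℕ} (hd : ∀ k, N < k → d k = 0) (n : ℕ) :
    ∑ k ∈ Icc 1 n, |d k| ≤ ∑ k ∈ Icc 1 N, |d k| := by
  rw [← sum_filter_of_ne (p := (· ≤ N)) fun k _ hk => by
    by_contra hkN
    exact hk (by rw [hd k (not_le.mp hkN), abs_zero])]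
  refine sum_le_sum_of_subset_of_nonneg (fun k hk => ?_) fun k _ _ => abs_nonneg _
  simp only [mem_filter, mem_Icc] at hk ⊢
  omega

lemma exists_abs_cesaro_le_of_eq_of_lt {f g : ℕ → ℝ} {N : ℕ} (hfg : ∀ k, N < k → f k = g k)
    (hf : ∃ C, ∀ n : ℕ, |1 / (n : ℝ) * ∑ k ∈ Icc 1 n, f k| ≤ C) :
    ∃ C, ∀ n : ℕ, |1 / (n : ℝ) * ∑ k ∈ Icc 1 n, g k| ≤ C := by
  obtain ⟨C, hC⟩ := hf
  refine ⟨C + ∑ k ∈ Icc 1 N, |g k - f k|, fun n => ?_⟩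
  have hsplit : ∑ k ∈ Icc 1 n, g k = ∑ k ∈ Icc 1 n, f k + ∑ k ∈ Icc 1 n, (g k - f k) := by
    rw [← sum_add_distrib]
    simp only [add_sub_cancel]
  have hdiff : |∑ k ∈ Icc 1 n, (g k - f k)| ≤ ∑ k ∈ Icc 1 N, |g k - f k| :=
    (abs_sum_le_sum_abs _ _).trans
      (sum_abs_Icc_le_of_eq_zero_of_lt (fun k hk => by rw [hfg k hk, sub_self]) n)
  have hinv : |1 / (n : ℝ)| ≤ 1 := by
    rw [one_div, abs_of_nonneg (by positivity)]
    exact Nat.cast_inv_le_one n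
  calc |1 / (n : ℝ) * ∑ k ∈ Icc 1 n, g k|
      ≤ |1 / (n : ℝ) * ∑ k ∈ Icc 1 n, f k| + |1 / (n : ℝ)| * |∑ k ∈ Icc 1 n, (g k - f k)| := by
        rw [hsplit, mul_add, ← abs_mul]
        exact abs_add_le _ _
    _ ≤ C + 1 * ∑ k ∈ Icc 1 N, |g k - f k| := by
        gcongr
        exact hC n
    _ = C + ∑ k ∈ Icc 1 N, |g k - f k| := by rw [one_mul]

lemma fdiff_congr {m k : ℕ} {y z : ℕ → ℝ} (h : ∀ v ≤ m, y (k + v) = z (k + v)) :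
    fdiff m y k = fdiff m z k :=
  sum_congr rfl fun v hv => by rw [h v (Nat.lt_succ_iff.mp (mem_range.mp hv))]

lemma memCinfG_of_eq_of_lt {m N : ℕ} {x y : ℕ → ℝ} (hx : memCinfG m x)
    (hy : ∀ k, 1 ≤ k → 0 < y k) (hxy : ∀ k, N < k → x k = y k) : memCinfG m y :=
  ⟨hy, exists_abs_cesaro_le_of_eq_of_lt (N := N)
    (fun k hk => fdiff_congr fun v _ => by rw [hxy (k + v) (by omega)]) hx.2⟩

def resetHead (m : ℕ) (x : ℕ → ℝ) (k : ℕ) : ℝ :=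
  if 1 ≤ k ∧ k ≤ m then 1 else x k

lemma resetHead_of_le {m i : ℕ} (x : ℕ → ℝ) (h1 : 1 ≤ i) (hm : i ≤ m) : resetHead m x i = 1 :=
  if_pos ⟨h1, hm⟩

lemma resetHead_of_lt {m k : ℕ} (x : ℕ → ℝ) (hk : m < k) : resetHead m x k = x k :=
  if_neg fun h => by omega

lemma memCinfG_resetHead {m : ℕ} {x : ℕ → ℝ} (hx : memCinfG m x) : memCinfG m (resetHead m x) := by
  refine memCinfG_of_eq_of_lt hx (fun k hk => ?_) fun k hk => (resetHead_of_lt x hk).symm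
  unfold resetHead
  split_ifs
  exacts [one_pos, hx.1 k hk]

theorem CinfG_alpha_dual_eq_general (m : ℕ) (a : ℕ → ℝ) :
    (∀ x : ℕ → ℝ, memCinfG m x →
        Summable (fun k : ℕ => |Real.log (a (k + 1))| * |Real.log (x (k + 1))|)) ↔
      (∀ x : ℕ → ℝ, memCinfG m x → (∀ i, 1 ≤ i → i ≤ m → x i = 1) →
        Summable (fun k : ℕ => |Real.log (a (k + 1))| * |Real.log (x (k + 1))|)) := by
  refine ⟨fun h x hx _ => h x hx, fun h x hx => ?_⟩
  have hsummable := h (resetHead m x) (memCinfG_resetHead hx) fun i => resetHead_of_le x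
  refine (summable_congr_atTop ?_).mp hsummable
  filter_upwards [Filter.eventually_ge_atTop m] with k hk
  rw [resetHead_of_lt x (by omega)]

/-- the α-duals of `C_∞^G(Δ_G^m)` and `υC_∞^G(Δ_G^m)` coincide:
for a positive sequence `a`, the series `∑_{k≥1} |log a_k|·|log x_k|` converges
for every `x ∈ C_∞^G(Δ_G^m)` iff it converges for every `x ∈ υC_∞^G(Δ_G^m)`. -/
theorem CinfG_alpha_dual_eq (m : ℕ) (hm : 1 ≤ m) (a : ℕ → ℝ)
    (ha : ∀ k, 1 ≤ k → 0 < a k) :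
    (∀ x : ℕ → ℝ, memCinfG m x →
        Summable (fun k : ℕ => |Real.log (a (k + 1))| * |Real.log (x (k + 1))|)) ↔
      (∀ x : ℕ → ℝ, memCinfG m x → (∀ i, 1 ≤ i → i ≤ m → x i = 1) →
        Summable (fun k : ℕ => |Real.log (a (k + 1))| * |Real.log (x (k + 1))|)) :=
  CinfG_alpha_dual_eq_general m a
end
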